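/- arXiv:1707.00293 — 2 statements merged into one kernel-verified Lean document; each statement's English description precedes it below -/
import Mathlib

section
/- Let W be the real vector space of n×n Hermitian complex matrices and let ξ ∈ W satisfy Tr(ξ) = 1. Let f, g : W → ℝ be functions differentiable at ξ, and suppose f vanishes on the whole affine hyperplane {η ∈ W : Tr(η) = 1}. Let F, G ∈ W represent the derivatives at ξ, i.e. Df(ξ)(η) = Tr(Fη) and Dg(ξ)(η) = Tr(Gη) for all η ∈ W. Then Tr(ξ·(F⊙G)) − Tr(Fξ)·Tr(Gξ) = 0. (This is the statement that the ideal of functions vanishing on the trace-one hyperplane is an ideal for the symmetric product associated with the modified tensor R̃ = G − Δ̃⊗Δ̃, so the symmetric product reduces to the hyperplane.) -/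
open Matrix

attribute [local instance] Matrix.frobeniusNormedAddCommGroup Matrix.frobeniusNormedSpace

/-- The Jordan product of two complex matrices: `x ⊙ y = (xy + yx)/2`. -/
noncomputable def jordanProd {n : ℕ} (x y : Matrix (Fin n) (Fin n) ℂ) :
    Matrix (Fin n) (Fin n) ℂ :=
  (1 / 2 : ℂ) • (x * y + y * x)

/-!
Since `f` vanishes on the trace-one hyperplane, its derivative at `ξ` kills every traceless
Hermitian direction. The direction `η₀ = ξ ⊙ G - Tr(Gξ) ξ` is Hermitian and traceless, and
by cyclicity of the trace `Tr(F η₀) = Tr(ξ (F ⊙ G)) - Tr(Fξ) Tr(Gξ)`.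
-/

theorem fderiv_apply_eq_zero_of_forall_add_smul {𝕜 E F : Type*} [NontriviallyNormedField 𝕜]
    [NormedAddCommGroup E] [NormedSpace 𝕜 E] [NormedAddCommGroup F] [NormedSpace 𝕜 F]
    {f : E → F} {x v : E} (hf : DifferentiableAt 𝕜 f x)
    (hv : ∀ t : 𝕜, f (x + t • v) = f x) : fderiv 𝕜 f x v = 0 := by
  have hline : HasDerivAt (fun t : 𝕜 => f (x + t • v)) (fderiv 𝕜 f x v) 0 :=
    hf.hasFDerivAt.hasLineDerivAt v
  simp only [hv] at hline
  exact hline.unique (hasDerivAt_const 0 (f x))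

namespace Matrix

theorem IsHermitian.add_real_smul {n : Type*} {A B : Matrix n n ℂ} (hA : A.IsHermitian)
    (hB : B.IsHermitian) (t : ℝ) : (A + t • B).IsHermitian :=
  hA.add (hB.smul (IsSelfAdjoint.all t))

variable {n : Type*} [Fintype n]

theorem IsHermitian.isSelfAdjoint_trace_mul {A B : Matrix n n ℂ} (hA : A.IsHermitian)
    (hB : B.IsHermitian) : IsSelfAdjoint (A * B).trace := by
  rw [IsSelfAdjoint, ← trace_conjTranspose, conjTranspose_mul, hA.eq, hB.eq, trace_mul_comm]

theorem IsHermitian.trace_mul_eq_zero_of_re {A B : Matrix n n ℂ} (hA : A.IsHermitian)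
    (hB : B.IsHermitian) (h : (A * B).trace.re = 0) : (A * B).trace = 0 := by
  rw [← Complex.conj_eq_iff_re.mp (hA.isSelfAdjoint_trace_mul hB), h, Complex.ofReal_zero]

end Matrix

section jordanProd

variable {n : ℕ}

theorem Matrix.IsHermitian.jordanProd {x y : Matrix (Fin n) (Fin n) ℂ} (hx : x.IsHermitian)
    (hy : y.IsHermitian) : (jordanProd x y).IsHermitian := by
  rw [_root_.jordanProd, IsHermitian, conjTranspose_smul, conjTranspose_add, conjTranspose_mul,
    conjTranspose_mul, hx.eq, hy.eq, add_comm]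
  simp

theorem trace_jordanProd (x y : Matrix (Fin n) (Fin n) ℂ) :
    (jordanProd x y).trace = (x * y).trace := by
  rw [jordanProd, trace_smul, trace_add, trace_mul_comm y x, smul_eq_mul]
  ring

theorem trace_mul_jordanProd_comm (x y z : Matrix (Fin n) (Fin n) ℂ) :
    (x * jordanProd y z).trace = (y * jordanProd x z).trace := by
  simp only [jordanProd, Matrix.mul_smul, Matrix.mul_add, trace_smul, trace_add,
    ← Matrix.mul_assoc]
  rw [trace_mul_cycle x z y, trace_mul_cycle y z x, add_comm]

end jordanProd

theorem fderiv_apply_eq_zero_of_trace_eq_zero {n : ℕ} {f : Matrix (Fin n) (Fin n) ℂ → ℝ}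
    {ξ η : Matrix (Fin n) (Fin n) ℂ} (hf : DifferentiableAt ℝ f ξ)
    (hfvan : ∀ η : Matrix (Fin n) (Fin n) ℂ, η.IsHermitian → η.trace = 1 → f η = 0)
    (hξ : ξ.IsHermitian) (hξtr : ξ.trace = 1) (hη : η.IsHermitian) (hηtr : η.trace = 0) :
    fderiv ℝ f ξ η = 0 := by
  refine fderiv_apply_eq_zero_of_forall_add_smul hf fun t => ?_
  have htr : (ξ + t • η).trace = 1 := by simp [trace_add, trace_smul, hξtr, hηtr]
  rw [hfvan _ (hξ.add_real_smul hη t) htr, hfvan ξ hξ hξtr]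

theorem symmetric_product_reduces_general {n : ℕ}
    (ξ : Matrix (Fin n) (Fin n) ℂ) (hξ : ξ.IsHermitian) (hξtr : ξ.trace = 1)
    (f : Matrix (Fin n) (Fin n) ℂ → ℝ)
    (hf : DifferentiableAt ℝ f ξ)
    (hfvan : ∀ η : Matrix (Fin n) (Fin n) ℂ, η.IsHermitian → η.trace = 1 → f η = 0)
    (F G : Matrix (Fin n) (Fin n) ℂ) (hF : F.IsHermitian) (hG : G.IsHermitian)
    (hdf : ∀ η : Matrix (Fin n) (Fin n) ℂ, η.IsHermitian →
      fderiv ℝ f ξ η = (Matrix.trace (F * η)).re) :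
    Matrix.trace (ξ * jordanProd F G) - Matrix.trace (F * ξ) * Matrix.trace (G * ξ) = 0 := by
  set η₀ := jordanProd ξ G - (G * ξ).trace • ξ
  have hη₀ : η₀.IsHermitian :=
    (hξ.jordanProd hG).sub (hξ.smul (hG.isSelfAdjoint_trace_mul hξ))
  have hη₀tr : η₀.trace = 0 := by
    rw [trace_sub, trace_smul, trace_jordanProd, hξtr, trace_mul_comm, smul_eq_mul, mul_one,
      sub_self]
  have hFη₀ : (F * η₀).trace = 0 :=
    hF.trace_mul_eq_zero_of_re hη₀ <| by
      rw [← hdf η₀ hη₀, fderiv_apply_eq_zero_of_trace_eq_zero hf hfvan hξ hξtr hη₀ hη₀tr]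
  rw [← hFη₀, Matrix.mul_sub, trace_sub, trace_mul_jordanProd_comm, Matrix.mul_smul, trace_smul,
    smul_eq_mul, mul_comm]

/-- On the real vector space of Hermitian matrices, if `f` vanishes on the affine
hyperplane of trace-one Hermitian matrices, `ξ` is a trace-one Hermitian point, and the
derivatives of `f` and `g` at `ξ` are represented via the trace pairing by Hermitian
matrices `F` and `G`, then `Tr(ξ·(F⊙G)) − Tr(Fξ)·Tr(Gξ) = 0`: the ideal of functions
vanishing on the trace-one hyperplane is an ideal for the symmetric product associated
with the modified tensor `R̃ = G − Δ̃⊗Δ̃`, so the symmetric product reduces to the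
hyperplane. -/
theorem symmetric_product_reduces {n : ℕ}
    (ξ : Matrix (Fin n) (Fin n) ℂ) (hξ : ξ.IsHermitian) (hξtr : ξ.trace = 1)
    (f g : Matrix (Fin n) (Fin n) ℂ → ℝ)
    (hf : DifferentiableAt ℝ f ξ) (hg : DifferentiableAt ℝ g ξ)
    (hfvan : ∀ η : Matrix (Fin n) (Fin n) ℂ, η.IsHermitian → η.trace = 1 → f η = 0)
    (F G : Matrix (Fin n) (Fin n) ℂ) (hF : F.IsHermitian) (hG : G.IsHermitian)
    (hdf : ∀ η : Matrix (Fin n) (Fin n) ℂ, η.IsHermitian →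
      fderiv ℝ f ξ η = (Matrix.trace (F * η)).re)
    (hdg : ∀ η : Matrix (Fin n) (Fin n) ℂ, η.IsHermitian →
      fderiv ℝ g ξ η = (Matrix.trace (G * η)).re) :
    Matrix.trace (ξ * jordanProd F G) - Matrix.trace (F * ξ) * Matrix.trace (G * ξ) = 0 :=
  symmetric_product_reduces_general ξ hξ hξtr f hf hfvan F G hF hG hdf
end

section
/- Let H be an n×n Hermitian complex matrix, let v_1, …, v_N be n×n Hermitian complex matrices, let c_1, …, c_N ≥ 0 be nonnegative reals, set V := Σ_j c_j v_j², and define L(ρ) := −i(Hρ − ρH) − (1/2)(Vρ + ρV) + Σ_j c_j v_j ρ v_j. Then for every n×n Hermitian matrix ρ one has Tr(L(ρ)·ρ) ≤ 0. In particular the purity F(ρ) = Tr(ρ²)/2 is a LaSalle function for positive linear combinations of quantum Gaussian semigroups with a Hamiltonian term. -/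
open Matrix
open scoped ComplexOrder

/-!
The Hamiltonian part drops out of `Tr(L(ρ) ρ)` by cyclicity of the trace, and what remains is
`Σ_j c_j (Tr(v_j ρ v_j ρ) - Tr(v_j² ρ²)) = ½ Σ_j c_j Tr(C_j²)` with `C_j = v_j ρ - ρ v_j`.
For Hermitian `v_j` and `ρ` the commutator `C_j` is skew-Hermitian, so
`Tr(C_j²) = -Tr(C_jᴴ C_j) ≤ 0`.
-/

namespace Matrix

variable {m : Type*} [Fintype m]

section CommRing

variable {R : Type*} [CommRing R] (A ρ : Matrix m m R)

theorem trace_commutator_mul_self : trace ((A * ρ - ρ * A) * ρ) = 0 := by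
  rw [sub_mul, trace_sub, trace_mul_cycle A ρ ρ, sub_self]

theorem trace_anticommutator_mul_self :
    trace ((A * ρ + ρ * A) * ρ) = 2 * trace (A * ρ * ρ) := by
  rw [add_mul, trace_add, ← trace_mul_cycle A ρ ρ, two_mul]

theorem trace_commutator_mul_commutator :
    trace ((A * ρ - ρ * A) * (A * ρ - ρ * A))
      = 2 * (trace (A * ρ * A * ρ) - trace (A * A * ρ * ρ)) := by
  have h₁ : trace (A * ρ * ρ * A) = trace (A * A * ρ * ρ) := by
    rw [trace_mul_comm, ← Matrix.mul_assoc, ← Matrix.mul_assoc]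
  have h₂ : trace (ρ * A * A * ρ) = trace (A * A * ρ * ρ) := by
    rw [Matrix.mul_assoc, trace_mul_comm, ← Matrix.mul_assoc, h₁]
  have h₃ : trace (ρ * A * ρ * A) = trace (A * ρ * A * ρ) := by
    rw [trace_mul_comm, ← Matrix.mul_assoc, ← Matrix.mul_assoc]
  simp only [sub_mul, mul_sub, trace_sub, ← Matrix.mul_assoc, h₁, h₂, h₃]
  ring

end CommRing

theorem IsHermitian.trace_commutator_mul_commutator_nonpos {R : Type*} [CommRing R]
    [PartialOrder R] [StarRing R] [StarOrderedRing R] {A ρ : Matrix m m R}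
    (hA : A.IsHermitian) (hρ : ρ.IsHermitian) :
    trace ((A * ρ - ρ * A) * (A * ρ - ρ * A)) ≤ 0 := by
  have hskew : (A * ρ - ρ * A)ᴴ = -(A * ρ - ρ * A) := by
    rw [conjTranspose_sub, conjTranspose_mul, conjTranspose_mul, hA.eq, hρ.eq, neg_sub]
  have h := (posSemidef_conjTranspose_mul_self (A * ρ - ρ * A)).trace_nonneg
  rwa [hskew, neg_mul, trace_neg, neg_nonneg] at h

theorem IsHermitian.trace_mul_mul_mul_le {𝕜 : Type*} [RCLike 𝕜] {A ρ : Matrix m m 𝕜}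
    (hA : A.IsHermitian) (hρ : ρ.IsHermitian) :
    trace (A * ρ * A * ρ) ≤ trace (A * A * ρ * ρ) := by
  have h := hA.trace_commutator_mul_commutator_nonpos hρ
  rw [trace_commutator_mul_commutator] at h
  rw [← sub_nonpos, ← inv_mul_cancel_left₀ (two_ne_zero (α := 𝕜)) (_ - _)]
  exact mul_nonpos_of_nonneg_of_nonpos (inv_nonneg.mpr zero_le_two) h

end Matrix

theorem purity_lasalle_gaussian_combination_general {n N : ℕ}
    (H : Matrix (Fin n) (Fin n) ℂ)
    (v : Fin N → Matrix (Fin n) (Fin n) ℂ) (hv : ∀ j, (v j).IsHermitian)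
    (c : Fin N → ℝ) (hc : ∀ j, 0 ≤ c j)
    (V : Matrix (Fin n) (Fin n) ℂ) (hV : V = ∑ j, (c j : ℂ) • (v j * v j))
    (L : Matrix (Fin n) (Fin n) ℂ → Matrix (Fin n) (Fin n) ℂ)
    (hL : ∀ ρ, L ρ = -Complex.I • (H * ρ - ρ * H) - (1 / 2 : ℂ) • (V * ρ + ρ * V)
        + ∑ j, (c j : ℂ) • (v j * ρ * v j)) :
    ∀ ρ : Matrix (Fin n) (Fin n) ℂ, ρ.IsHermitian →
      Matrix.trace (L ρ * ρ) ≤ 0 := by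
  intro ρ hρ
  have hV_trace : trace (V * ρ * ρ) = ∑ j, (c j : ℂ) * trace (v j * v j * ρ * ρ) := by
    simp only [hV, Finset.sum_mul, smul_mul_assoc, trace_sum, trace_smul, smul_eq_mul]
  have hdecomp : trace (L ρ * ρ)
      = ∑ j, (c j : ℂ) * (trace (v j * ρ * v j * ρ) - trace (v j * v j * ρ * ρ)) := by
    rw [hL, add_mul, sub_mul, smul_mul_assoc, smul_mul_assoc, Finset.sum_mul, trace_add,
      trace_sub, trace_smul, trace_smul, trace_commutator_mul_self,
      trace_anticommutator_mul_self, hV_trace]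
    simp only [smul_mul_assoc, trace_sum, trace_smul, smul_eq_mul, mul_sub,
      Finset.sum_sub_distrib]
    ring
  rw [hdecomp]
  refine Finset.sum_nonpos fun j _ => mul_nonpos_of_nonneg_of_nonpos ?_ ?_
  · exact_mod_cast hc j
  · exact sub_nonpos.mpr ((hv j).trace_mul_mul_mul_le hρ)

/-- For the GKLS generator `L(ρ) = −i(Hρ − ρH) − (1/2)(Vρ + ρV) + Σ_j c_j v_j ρ v_j`
of a positive linear combination of quantum Gaussian semigroups with a Hamiltonian term
(`H`, `v_j` Hermitian, `c_j ≥ 0`, `V = Σ_j c_j v_j²`), one has `Tr(L(ρ)·ρ) ≤ 0` for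
every Hermitian `ρ`: the purity `F(ρ) = Tr(ρ²)/2` is a LaSalle function. -/
theorem purity_lasalle_gaussian_combination {n N : ℕ}
    (H : Matrix (Fin n) (Fin n) ℂ) (hH : H.IsHermitian)
    (v : Fin N → Matrix (Fin n) (Fin n) ℂ) (hv : ∀ j, (v j).IsHermitian)
    (c : Fin N → ℝ) (hc : ∀ j, 0 ≤ c j)
    (V : Matrix (Fin n) (Fin n) ℂ) (hV : V = ∑ j, (c j : ℂ) • (v j * v j))
    (L : Matrix (Fin n) (Fin n) ℂ → Matrix (Fin n) (Fin n) ℂ)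
    (hL : ∀ ρ, L ρ = -Complex.I • (H * ρ - ρ * H) - (1 / 2 : ℂ) • (V * ρ + ρ * V)
        + ∑ j, (c j : ℂ) • (v j * ρ * v j)) :
    ∀ ρ : Matrix (Fin n) (Fin n) ℂ, ρ.IsHermitian →
      Matrix.trace (L ρ * ρ) ≤ 0 :=
  purity_lasalle_gaussian_combination_general H v hv c hc V hV L hL
end
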